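/- For every k ≥ 1, every strictly increasing sequence of positive real numbers 0 < s₁ < s₂ < ⋯ < s_k, and every sequence of positive natural numbers n₁, …, n_k, let f : [0,∞) → [0,∞) be the continuous piecewise linear function determined by: f(0) = 0; f has slope n_i on the interval [s_{i−1}, s_i] for each i ∈ {1,…,k} (where s₀ := 0); and f is constant equal to f(s_k) on [s_k, ∞). Then there exists a compact metric space X equipped with a Borel measure μ and a point x ∈ X such that for every s ≥ 0, μ(B_x(e^s)) = e^{f(s)}; that is, the volume growth transform satisfies VGT_x(s) = f(s) for all s ≥ 0. -/

import Mathlib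

/-!
Realize the volume growth on the segment `X = [0, R]` centred at `0`: for a continuous
nondecreasing `g ≥ 0` that is constant on `[R, ∞)`, the measure `g 0 • δ₀ + dg` gives the ball
of radius `r` (that is, `[0, min r R]` up to an endpoint) mass `g r`. Taking
`g r = exp (f (log (max r 1)))` and `R = exp (s k)` gives `μ (B₀ (e^u)) = e^{f u}` for `u ≥ 0`;
`g` is monotone and continuous because `f` is continuous and affine with slope `n i ≥ 0` on each
piece, and constant after `s k`.
-/

open Set MeasureTheory Metric

theorem monotoneOn_Icc_of_Icc_of_Icc {α β : Type*} [LinearOrder α] [Preorder β] {f : α → β}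
    {a b c : α} (h₁ : MonotoneOn f (Icc a b)) (h₂ : MonotoneOn f (Icc b c)) :
    MonotoneOn f (Icc a c) := by
  rcases lt_or_ge b a with hba | hab
  · exact h₂.mono (Icc_subset_Icc_left hba.le)
  rcases lt_or_ge c b with hcb | hbc
  · exact h₁.mono (Icc_subset_Icc_right hcb.le)
  rw [← Icc_union_Icc_eq_Icc hab hbc]
  exact h₁.union_right h₂ (isGreatest_Icc hab) (isLeast_Icc hbc)

def HasPiecewiseSlopes (k : ℕ) (s : ℕ → ℝ) (n : ℕ → ℕ) (f : ℝ → ℝ) : Prop :=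
  ∀ i < k, ∀ t ∈ Icc (s i) (s (i + 1)), f t = f (s i) + (n i : ℝ) * (t - s i)

namespace HasPiecewiseSlopes

variable {k : ℕ} {s : ℕ → ℝ} {n : ℕ → ℕ} {f : ℝ → ℝ}

theorem monotoneOn_Icc (h : HasPiecewiseSlopes k s n f) {i : ℕ} (hi : i < k) :
    MonotoneOn f (Icc (s i) (s (i + 1))) := by
  intro a ha b hb hab
  rw [h i hi a ha, h i hi b hb]
  gcongr

theorem continuousOn_Icc (h : HasPiecewiseSlopes k s n f) {i : ℕ} (hi : i < k) :
    ContinuousOn f (Icc (s i) (s (i + 1))) :=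
  (by fun_prop : Continuous fun t : ℝ => f (s i) + (n i : ℝ) * (t - s i)).continuousOn.congr
    (h i hi)

theorem monotoneOn_Icc_zero (h : HasPiecewiseSlopes k s n f) (hs0 : s 0 = 0) :
    ∀ j ≤ k, MonotoneOn f (Icc 0 (s j))
  | 0, _ => by rw [hs0, Icc_self]; exact subsingleton_singleton.monotoneOn f
  | j + 1, hj => monotoneOn_Icc_of_Icc_of_Icc (h.monotoneOn_Icc_zero hs0 j (by omega))
      (h.monotoneOn_Icc (by omega))

theorem continuousOn_Icc_zero (h : HasPiecewiseSlopes k s n f) (hs0 : s 0 = 0) :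
    ∀ j ≤ k, ContinuousOn f (Icc 0 (s j))
  | 0, _ => by rw [hs0, Icc_self]; exact continuousOn_singleton f 0
  | j + 1, hj => ((h.continuousOn_Icc_zero hs0 j (by omega)).union_of_isClosed
      (h.continuousOn_Icc (by omega)) isClosed_Icc isClosed_Icc).mono Icc_subset_Icc_union_Icc

theorem monotoneOn_Ici_zero (h : HasPiecewiseSlopes k s n f) (hs0 : s 0 = 0)
    (hconst : ∀ t, s k ≤ t → f t = f (s k)) : MonotoneOn f (Ici 0) := by
  have hlast : MonotoneOn f (Ici (s k)) :=
    monotoneOn_const.congr fun t ht => (hconst t ht).symm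
  intro a ha b hb hab
  exact monotoneOn_Icc_of_Icc_of_Icc (h.monotoneOn_Icc_zero hs0 k le_rfl)
    (hlast.mono Icc_subset_Ici_self) ⟨ha, hab⟩ ⟨hb, le_rfl⟩ hab

theorem continuousOn_Ici_zero (h : HasPiecewiseSlopes k s n f) (hs0 : s 0 = 0)
    (hconst : ∀ t, s k ≤ t → f t = f (s k)) : ContinuousOn f (Ici 0) :=
  ((h.continuousOn_Icc_zero hs0 k le_rfl).union_of_isClosed
    (continuousOn_const.congr hconst) isClosed_Icc isClosed_Ici).mono Ici_subset_Icc_union_Ici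

end HasPiecewiseSlopes

namespace StieltjesFunction

variable {G : StieltjesFunction ℝ}

theorem measure_Icc_of_continuous (hG : Continuous G) (a b : ℝ) :
    G.measure (Icc a b) = ENNReal.ofReal (G b - G a) := by
  rw [G.measure_Icc, hG.continuousWithinAt.leftLim_eq]

theorem measure_Ico_of_continuous (hG : Continuous G) (a b : ℝ) :
    G.measure (Ico a b) = ENNReal.ofReal (G b - G a) := by
  rw [G.measure_Ico, hG.continuousWithinAt.leftLim_eq, hG.continuousWithinAt.leftLim_eq]

end StieltjesFunction

theorem exists_compact_measure_ball_eq (g : ℝ → ℝ) (hmono : Monotone g) (hcont : Continuous g)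
    (h0 : 0 ≤ g 0) {R : ℝ} (hR : 0 ≤ R) (hconst : ∀ r, R ≤ r → g r = g R) :
    ∃ (X : Type) (_ : MetricSpace X) (_ : CompactSpace X) (_ : MeasurableSpace X)
      (_ : BorelSpace X) (μ : Measure X) (x : X),
      ∀ r, 0 < r → μ (ball x r) = ENNReal.ofReal (g r) := by
  let G : StieltjesFunction ℝ := ⟨g, hmono, fun _ => hcont.continuousWithinAt⟩
  let ν : Measure ℝ := ENNReal.ofReal (g 0) • Measure.dirac 0 + G.measure
  have hν : ∀ S, (0 : ℝ) ∈ S → ν S = ENNReal.ofReal (g 0) + G.measure S := by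
    intro S hS
    simp [ν, Measure.dirac_apply_of_mem hS]
  have hsum : ∀ b, 0 ≤ b →
      ENNReal.ofReal (g 0) + ENNReal.ofReal (g b - g 0) = ENNReal.ofReal (g b) := by
    intro b hb
    rw [← ENNReal.ofReal_add h0 (sub_nonneg.2 (hmono hb)), add_sub_cancel]
  refine ⟨Icc (0 : ℝ) R, inferInstance, inferInstance, inferInstance, inferInstance,
    ν.comap Subtype.val, ⟨0, le_rfl, hR⟩, fun r hr => ?_⟩
  have hball : Subtype.val '' ball (⟨0, le_rfl, hR⟩ : Icc (0 : ℝ) R) r = Icc 0 R ∩ Ico 0 r := by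
    ext y
    simp only [mem_image, mem_ball, Subtype.exists, Subtype.dist_eq, Real.dist_eq, sub_zero,
      exists_and_right, exists_eq_right, mem_inter_iff, mem_Ico]
    exact ⟨fun ⟨hy, hyr⟩ => ⟨hy, hy.1, (le_abs_self y).trans_lt hyr⟩,
      fun ⟨hy, _, hyr⟩ => ⟨hy, by rwa [abs_of_nonneg hy.1]⟩⟩
  rw [(MeasurableEmbedding.subtype_coe measurableSet_Icc).comap_apply, hball]
  rcases le_or_gt r R with hrR | hRr
  · rw [inter_eq_right.2 (Ico_subset_Icc_self.trans (Icc_subset_Icc_right hrR)),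
      hν (Ico 0 r) ⟨le_rfl, hr⟩, StieltjesFunction.measure_Ico_of_continuous hcont, hsum r hr.le]
  · rw [inter_eq_left.2 (Icc_subset_Ico_right hRr), hν (Icc 0 R) ⟨le_rfl, hR⟩,
      StieltjesFunction.measure_Icc_of_continuous hcont, hsum R hR, hconst r hRr.le]

theorem exists_compact_measure_ball_exp_eq (f : ℝ → ℝ) (hmono : MonotoneOn f (Ici 0))
    (hcont : ContinuousOn f (Ici 0)) (c : ℝ) (hc : ∀ t, c ≤ t → f t = f c) :
    ∃ (X : Type) (_ : MetricSpace X) (_ : CompactSpace X) (_ : MeasurableSpace X)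
      (_ : BorelSpace X) (μ : Measure X) (x : X),
      ∀ u, 0 ≤ u → μ (ball x (Real.exp u)) = ENNReal.ofReal (Real.exp (f u)) := by
  -- only radii `≥ 1` are probed; clamping there keeps `L` in `[0, ∞)`, where `f` is tame
  let L : ℝ → ℝ := fun r => Real.log (max r 1)
  have hL_pos : ∀ r : ℝ, 0 < max r 1 := fun r => lt_max_of_lt_right one_pos
  have hL_nonneg : ∀ r, 0 ≤ L r := fun r => Real.log_nonneg (le_max_right r 1)
  have hL_mono : Monotone L := fun a b hab => Real.log_le_log (hL_pos a) (max_le_max_right 1 hab)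
  have hL_cont : Continuous L := (continuous_id.max continuous_const).log fun r => (hL_pos r).ne'
  have hfL : ∀ r, Real.exp c ≤ r → f (L r) = f c := fun r hr =>
    hc _ ((Real.le_log_iff_exp_le (hL_pos r)).2 (hr.trans (le_max_left r 1)))
  obtain ⟨X, _, _, _, _, μ, x, hμ⟩ := exists_compact_measure_ball_eq (fun r => Real.exp (f (L r)))
    (fun a b hab => Real.exp_le_exp.2 (hmono (hL_nonneg a) (hL_nonneg b) (hL_mono hab)))
    (Real.continuous_exp.comp (hcont.comp_continuous hL_cont hL_nonneg)) (Real.exp_pos _).le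
    (Real.exp_pos c).le (fun r hr => by rw [hfL r hr, hfL _ le_rfl])
  refine ⟨X, inferInstance, inferInstance, inferInstance, inferInstance, μ, x, fun u hu => ?_⟩
  have hLu : L (Real.exp u) = u := by
    simp only [L, max_eq_left (Real.one_le_exp hu), Real.log_exp]
  rw [hμ _ (Real.exp_pos u), hLu]

theorem vgt_realization_general (k : ℕ)
    (s : ℕ → ℝ) (hs0 : s 0 = 0)
    (n : ℕ → ℕ)
    (f : ℝ → ℝ)
    (hslope : ∀ i < k, ∀ t ∈ Set.Icc (s i) (s (i + 1)),
      f t = f (s i) + (n i : ℝ) * (t - s i))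
    (hconst : ∀ t : ℝ, s k ≤ t → f t = f (s k)) :
    ∃ (X : Type) (_ : MetricSpace X) (_ : CompactSpace X)
      (_ : MeasurableSpace X) (_ : BorelSpace X)
      (μ : MeasureTheory.Measure X) (x : X),
      ∀ u : ℝ, 0 ≤ u →
        μ (Metric.ball x (Real.exp u)) = ENNReal.ofReal (Real.exp (f u)) := by
  have hpw : HasPiecewiseSlopes k s n f := hslope
  exact exists_compact_measure_ball_exp_eq f (hpw.monotoneOn_Ici_zero hs0 hconst)
    (hpw.continuousOn_Ici_zero hs0 hconst) (s k) hconst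

theorem vgt_realization (k : ℕ) (hk : 1 ≤ k)
    (s : ℕ → ℝ) (hs0 : s 0 = 0) (hs : ∀ i < k, s i < s (i + 1))
    (n : ℕ → ℕ) (hn : ∀ i < k, 0 < n i)
    (f : ℝ → ℝ) (hf0 : f 0 = 0)
    (hslope : ∀ i < k, ∀ t ∈ Set.Icc (s i) (s (i + 1)),
      f t = f (s i) + (n i : ℝ) * (t - s i))
    (hconst : ∀ t : ℝ, s k ≤ t → f t = f (s k)) :
    ∃ (X : Type) (_ : MetricSpace X) (_ : CompactSpace X)
      (_ : MeasurableSpace X) (_ : BorelSpace X)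
      (μ : MeasureTheory.Measure X) (x : X),
      ∀ u : ℝ, 0 ≤ u →
        μ (Metric.ball x (Real.exp u)) = ENNReal.ofReal (Real.exp (f u)) :=
  vgt_realization_general k s hs0 n f hslope hconst
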